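/- arXiv:2406.01019 — 2 statements merged into one kernel-verified Lean document; each statement's English description precedes it below -/
import Mathlib

section
/- Let $k$ be an algebraically closed field of characteristic zero, let $s, t \geq 1$ and $u \geq 0$ be integers, and let $c_1, c_2 \in k \setminus \{0\}$. Then the $k$-derivation $\bar{d} = \partial_x + x^u(c_1 x^t y^s + c_2)\partial_y$ of $k[x,y]$ is simple if and only if the $k$-derivation $d = \partial_x + x^u(x^t y^s + 1)\partial_y$ of $k[x,y]$ is simple. -/
/-!
The rescaling `x ↦ a x`, `y ↦ b y` is an automorphism of `k[x,y]`, and conjugating a derivation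
by an automorphism, or multiplying it by a unit, does not change its lattice of differential
ideals, hence preserves simplicity. Conjugating `d` by this rescaling and dividing by `a` gives
`∂_x + (b / a^(u+1)) x^u (a^(-t) b^(-s) x^t y^s + 1) ∂_y`, which is `d̄` as soon as
`b = c₂ a^(u+1)` and `c₁ a^t b^s = c₂`; these reduce to `a^(t + s(u+1)) = c₂ / (c₁ c₂^s)`,
solvable in the algebraically closed field `k` since the exponent is positive.
-/

open MvPolynomial

/-- A `k`-derivation `d` of `k[x,y]` is *simple* if the only `d`-differential ideals
(ideals `I` with `d(I) ⊆ I`) are `(0)` and the whole ring. Here `k[x,y]` is modelled as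
`MvPolynomial (Fin 2) k`, with `x = X 0` and `y = X 1`. -/
def IsSimpleDerivation {k : Type*} [CommRing k]
    (d : Derivation k (MvPolynomial (Fin 2) k) (MvPolynomial (Fin 2) k)) : Prop :=
  ∀ I : Ideal (MvPolynomial (Fin 2) k), (∀ f ∈ I, d f ∈ I) → I = ⊥ ∨ I = ⊤

namespace Derivation

variable {R A : Type*} [CommRing R] [CommRing A] [Algebra R A]

def conj (e : A ≃ₐ[R] A) (d : Derivation R A A) : Derivation R A A where
  toLinearMap := e.symm.toLinearMap ∘ₗ d.toLinearMap ∘ₗ e.toLinearMap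
  map_one_eq_zero' := by simp
  leibniz' a b := by simp [Derivation.leibniz]

@[simp]
lemma conj_apply (e : A ≃ₐ[R] A) (d : Derivation R A A) (f : A) :
    d.conj e f = e.symm (d (e f)) := rfl

@[simp]
lemma conj_conj_symm (e : A ≃ₐ[R] A) (d : Derivation R A A) : (d.conj e).conj e.symm = d := by
  ext f
  simp

end Derivation

namespace MvPolynomial

variable {σ R : Type*} [CommRing R]

noncomputable def scaleVars (w : σ → Rˣ) : MvPolynomial σ R ≃ₐ[R] MvPolynomial σ R :=
  AlgEquiv.ofAlgHom (aeval fun i => C (w i : R) * X i)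
    (aeval fun i => C (((w i)⁻¹ : Rˣ) : R) * X i)
    (by ext i; simp [← mul_assoc, ← C_mul])
    (by ext i; simp [← mul_assoc, ← C_mul])

@[simp]
lemma scaleVars_X (w : σ → Rˣ) (i : σ) : scaleVars w (X i) = C (w i : R) * X i :=
  aeval_X _ i

@[simp]
lemma scaleVars_symm (w : σ → Rˣ) : (scaleVars w).symm = scaleVars w⁻¹ := rfl

lemma conj_scaleVars_mkDerivation (w : σ → Rˣ) (f : σ → MvPolynomial σ R) :
    (mkDerivation R f).conj (scaleVars w) =
      mkDerivation R fun i => (w i : R) • scaleVars w⁻¹ (f i) := by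
  refine derivation_ext fun i => ?_
  simp [C_mul', mkDerivation_X]

end MvPolynomial

section Simplicity

variable {k : Type*} [CommRing k]

lemma isSimpleDerivation_smul_iff {c : k} (hc : IsUnit c)
    (d : Derivation k (MvPolynomial (Fin 2) k) (MvPolynomial (Fin 2) k)) :
    IsSimpleDerivation (c • d) ↔ IsSimpleDerivation d := by
  have hmem (I : Ideal (MvPolynomial (Fin 2) k)) (f) : c • f ∈ I ↔ f ∈ I := by
    simpa [Units.smul_def] using I.smul_mem_iff' (G := kˣ) (x := f) hc.unit
  simp [IsSimpleDerivation, hmem]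

lemma IsSimpleDerivation.conj
    {d : Derivation k (MvPolynomial (Fin 2) k) (MvPolynomial (Fin 2) k)}
    (hd : IsSimpleDerivation d) (e : MvPolynomial (Fin 2) k ≃ₐ[k] MvPolynomial (Fin 2) k) :
    IsSimpleDerivation (d.conj e) := by
  intro I hI
  have hmap : ∀ g ∈ I.map e, d g ∈ I.map e := by
    intro g hg
    obtain ⟨f, hf, rfl⟩ := (Ideal.mem_map_of_equiv e g).mp hg
    simpa using Ideal.mem_map_of_mem e (hI f hf)
  refine (hd _ hmap).imp (fun h => ?_) (fun h => ?_)
  · exact (Ideal.map_eq_bot_iff_of_injective e.injective).mp h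
  · exact (Ideal.map_eq_top_of_bijective e e.bijective).mp h

lemma isSimpleDerivation_conj_iff
    (d : Derivation k (MvPolynomial (Fin 2) k) (MvPolynomial (Fin 2) k))
    (e : MvPolynomial (Fin 2) k ≃ₐ[k] MvPolynomial (Fin 2) k) :
    IsSimpleDerivation (d.conj e) ↔ IsSimpleDerivation d :=
  ⟨fun h => by simpa using h.conj e.symm, fun h => h.conj e⟩

end Simplicity

section Normalization

variable {k : Type*} [Field k]

lemma xtys_derivation_eq_smul_conj_scaleVars {a b c₁ c₂ : k} (ha : a ≠ 0) (hb : b ≠ 0)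
    {u t s : ℕ} (hab : b = c₂ * a ^ (u + 1)) (hc : c₁ * a ^ t * b ^ s = c₂) :
    mkDerivation k ![1, X 0 ^ u * (C c₁ * X 0 ^ t * X 1 ^ s + C c₂)] =
      a⁻¹ • (mkDerivation k ![1, X 0 ^ u * (X 0 ^ t * X 1 ^ s + 1)]).conj
        (scaleVars ![Units.mk0 a ha, Units.mk0 b hb]) := by
  have hc₂_eq : c₂ = a⁻¹ * b * a⁻¹ ^ u := by
    rw [hab, inv_pow]
    field_simp
    ring
  have hc₁_eq : c₁ = a⁻¹ * b * a⁻¹ ^ u * a⁻¹ ^ t * b⁻¹ ^ s := by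
    rw [← hc₂_eq, ← hc, inv_pow, inv_pow]
    field_simp
  rw [conj_scaleVars_mkDerivation]
  refine derivation_ext fun i => ?_
  fin_cases i
  · simp [ha]
  · simp only [Fin.mk_one, mkDerivation_X, Matrix.cons_val_one, Matrix.cons_val_fin_one,
      Derivation.coe_smul, Pi.smul_apply, Units.val_mk0, map_mul, map_pow, scaleVars_X,
      Pi.inv_apply, Matrix.cons_val_zero, Units.val_inv_eq_inv_val, map_add, map_one]
    rw [hc₁_eq, hc₂_eq]
    simp only [smul_eq_C_mul, map_mul, map_pow]
    ring

lemma exists_xtys_scaling [IsAlgClosed k] {c₁ c₂ : k} (hc₁ : c₁ ≠ 0) (hc₂ : c₂ ≠ 0)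
    (u t s : ℕ) (hN : t + s * (u + 1) ≠ 0) :
    ∃ a b : k, a ≠ 0 ∧ b ≠ 0 ∧ b = c₂ * a ^ (u + 1) ∧ c₁ * a ^ t * b ^ s = c₂ := by
  obtain ⟨a, ha⟩ := IsAlgClosed.exists_pow_nat_eq (c₂ / (c₁ * c₂ ^ s)) (Nat.pos_of_ne_zero hN)
  have ha₀ : a ≠ 0 := by
    rintro rfl
    rw [zero_pow hN] at ha
    exact div_ne_zero hc₂ (mul_ne_zero hc₁ (pow_ne_zero s hc₂)) ha.symm
  refine ⟨a, c₂ * a ^ (u + 1), ha₀, mul_ne_zero hc₂ (pow_ne_zero _ ha₀), rfl, ?_⟩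
  calc c₁ * a ^ t * (c₂ * a ^ (u + 1)) ^ s = c₁ * c₂ ^ s * a ^ (t + s * (u + 1)) := by ring
    _ = c₂ := by rw [ha]; field_simp

end Normalization

theorem simple_derivation_normalization_xtys_general
    (k : Type*) [Field k] [IsAlgClosed k]
    (s t u : ℕ) (ht : 1 ≤ t)
    (c₁ c₂ : k) (hc₁ : c₁ ≠ 0) (hc₂ : c₂ ≠ 0) :
    IsSimpleDerivation
      (MvPolynomial.mkDerivation k
        ![1, X 0 ^ u * (C c₁ * X 0 ^ t * X 1 ^ s + C c₂)]) ↔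
    IsSimpleDerivation
      (MvPolynomial.mkDerivation k
        ![1, X 0 ^ u * (X 0 ^ t * X 1 ^ s + 1)]) := by
  obtain ⟨a, b, ha, hb, hab, hc⟩ := exists_xtys_scaling hc₁ hc₂ u t s (Nat.add_pos_left ht _).ne'
  rw [xtys_derivation_eq_smul_conj_scaleVars ha hb hab hc,
    isSimpleDerivation_smul_iff (isUnit_iff_ne_zero.mpr (inv_ne_zero ha)),
    isSimpleDerivation_conj_iff]

theorem simple_derivation_normalization_xtys
    (k : Type*) [Field k] [CharZero k] [IsAlgClosed k]
    (s t u : ℕ) (hs : 1 ≤ s) (ht : 1 ≤ t)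
    (c₁ c₂ : k) (hc₁ : c₁ ≠ 0) (hc₂ : c₂ ≠ 0) :
    IsSimpleDerivation
      (MvPolynomial.mkDerivation k
        ![1, X 0 ^ u * (C c₁ * X 0 ^ t * X 1 ^ s + C c₂)]) ↔
    IsSimpleDerivation
      (MvPolynomial.mkDerivation k
        ![1, X 0 ^ u * (X 0 ^ t * X 1 ^ s + 1)]) :=
  simple_derivation_normalization_xtys_general k s t u ht c₁ c₂ hc₁ hc₂
end

section
/- Let $k$ be a field of characteristic zero, let $r, t, s_1, s_2 \geq 0$ be integers with $s_1 \neq s_2$, and let $c_1, c_2 \in k$. Then the $k$-derivation $d = y^r\partial_x + x^t(c_1 y^{s_1} + c_2 y^{s_2})\partial_y$ of $k[x,y]$ is not simple. -/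
open MvPolynomial

/-!
Write `d = y^r ∂ₓ + x^t f(y) ∂_y` with `f = c₁ Y^{s₁} + c₂ Y^{s₂} ∈ k[Y]`.
If `f` is not constant, `f(y)` is a Darboux polynomial: `d(f(y)) = x^t f'(y) f(y)`,
so `(f(y))` is a proper nonzero differential ideal.
If `f = c` is constant, `c(r+1) x^{t+1} - (t+1) y^{r+1}` is a first integral of `d`, and it is
not constant because `t + 1 ≠ 0` in characteristic zero.
Nonconstancy is detected by setting `x = 0`.
-/

theorem Derivation.map_mem_span_singleton_of_dvd {R A : Type*} [CommSemiring R] [CommRing A]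
    [Algebra R A] (D : Derivation R A A) {P : A} (hP : P ∣ D P) {f : A}
    (hf : f ∈ Ideal.span {P}) : D f ∈ Ideal.span {P} := by
  obtain ⟨g, rfl⟩ := Ideal.mem_span_singleton.mp hf
  rw [Ideal.mem_span_singleton, Derivation.leibniz, smul_eq_mul, smul_eq_mul]
  exact dvd_add (dvd_mul_right P _) (dvd_mul_of_dvd_right hP g)

theorem ne_zero_and_not_isUnit_of_natDegree_map_ne_zero {R S : Type*} [Semiring R] [Semiring S]
    [NoZeroDivisors S] (φ : R →+* Polynomial S) {P : R} (h : (φ P).natDegree ≠ 0) :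
    P ≠ 0 ∧ ¬IsUnit P :=
  ⟨by rintro rfl; simp at h, fun hu => h (Polynomial.natDegree_eq_zero_of_isUnit (hu.map φ))⟩

theorem not_isSimpleDerivation_of_dvd {k : Type*} [CommRing k]
    (d : Derivation k (MvPolynomial (Fin 2) k) (MvPolynomial (Fin 2) k))
    {P : MvPolynomial (Fin 2) k} (hP0 : P ≠ 0) (hPu : ¬IsUnit P) (hdvd : P ∣ d P) :
    ¬IsSimpleDerivation d := fun hd =>
  (hd _ fun _ => d.map_mem_span_singleton_of_dvd hdvd).elim
    (fun h => hP0 (Ideal.span_singleton_eq_bot.mp h))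
    (fun h => hPu (Ideal.span_singleton_eq_top.mp h))

section PowPolyDerivation

variable {k : Type*} [Field k]

/-- The derivation `y^r ∂ₓ + x^t f(y) ∂_y` of `k[x,y]`. -/
noncomputable def powPolyDerivation (r t : ℕ) (f : Polynomial k) :
    Derivation k (MvPolynomial (Fin 2) k) (MvPolynomial (Fin 2) k) :=
  mkDerivation k ![X 1 ^ r, X 0 ^ t * Polynomial.aeval (X 1) f]

noncomputable def evalXZero : MvPolynomial (Fin 2) k →ₐ[k] Polynomial k :=
  aeval ![0, Polynomial.X]

theorem evalXZero_aeval_X_one (g : Polynomial k) :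
    evalXZero (Polynomial.aeval (X 1 : MvPolynomial (Fin 2) k) g) = g := by
  rw [← Polynomial.aeval_algHom_apply]
  simp [evalXZero]

variable (r t : ℕ)

theorem powPolyDerivation_X_zero (f : Polynomial k) :
    powPolyDerivation r t f (X 0) = X 1 ^ r :=
  mkDerivation_X _ _ _

theorem powPolyDerivation_X_one (f : Polynomial k) :
    powPolyDerivation r t f (X 1) = X 0 ^ t * Polynomial.aeval (X 1) f :=
  mkDerivation_X _ _ _

theorem not_isSimpleDerivation_powPolyDerivation_of_natDegree_ne_zero {f : Polynomial k}
    (hf : f.natDegree ≠ 0) : ¬IsSimpleDerivation (powPolyDerivation r t f) := by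
  set F : MvPolynomial (Fin 2) k := Polynomial.aeval (X 1) f
  have hdF : powPolyDerivation r t f F =
      Polynomial.aeval (X 1) (Polynomial.derivative f) * X 0 ^ t * F := by
    rw [Derivation.map_aeval, powPolyDerivation_X_one, smul_eq_mul, mul_assoc]
  have hF := ne_zero_and_not_isUnit_of_natDegree_map_ne_zero evalXZero.toRingHom
    (P := F) (by simpa [F, evalXZero_aeval_X_one] using hf)
  exact not_isSimpleDerivation_of_dvd _ hF.1 hF.2 (hdF ▸ dvd_mul_left F _)

theorem powPolyDerivation_C_firstIntegral (c : k) :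
    powPolyDerivation r t (Polynomial.C c)
      (C (c * (r + 1)) * X 0 ^ (t + 1) - C ((t : k) + 1) * X 1 ^ (r + 1)) = 0 := by
  rw [map_sub, Derivation.leibniz, Derivation.leibniz, derivation_C, derivation_C,
    Derivation.leibniz_pow, Derivation.leibniz_pow, powPolyDerivation_X_zero,
    powPolyDerivation_X_one, Polynomial.aeval_C, algebraMap_eq]
  simp only [smul_eq_mul, nsmul_eq_mul, map_mul, map_add, map_natCast, map_one]
  push_cast
  ring

theorem not_isSimpleDerivation_powPolyDerivation_C [CharZero k] (c : k) :
    ¬IsSimpleDerivation (powPolyDerivation r t (Polynomial.C c)) := by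
  set H : MvPolynomial (Fin 2) k :=
    C (c * (r + 1)) * X 0 ^ (t + 1) - C ((t : k) + 1) * X 1 ^ (r + 1)
  have hH : evalXZero H = -(Polynomial.C ((t : k) + 1) * Polynomial.X ^ (r + 1)) := by
    simp [H, evalXZero]
  have hdeg : (evalXZero H).natDegree ≠ 0 := by
    rw [hH, Polynomial.natDegree_neg,
      Polynomial.natDegree_C_mul_X_pow _ _ (Nat.cast_add_one_ne_zero t)]
    exact Nat.succ_ne_zero r
  have hH0 := ne_zero_and_not_isUnit_of_natDegree_map_ne_zero evalXZero.toRingHom hdeg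
  exact not_isSimpleDerivation_of_dvd _ hH0.1 hH0.2
    ((powPolyDerivation_C_firstIntegral r t c).symm ▸ dvd_zero H)

theorem not_isSimpleDerivation_powPolyDerivation [CharZero k] (f : Polynomial k) :
    ¬IsSimpleDerivation (powPolyDerivation r t f) := by
  by_cases hf : f.natDegree = 0
  · rw [Polynomial.eq_C_of_natDegree_eq_zero hf]
    exact not_isSimpleDerivation_powPolyDerivation_C r t _
  · exact not_isSimpleDerivation_powPolyDerivation_of_natDegree_ne_zero r t hf

end PowPolyDerivation

theorem not_simple_derivation_equal_x_powers_general
    (k : Type*) [Field k] [CharZero k]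
    (r t s₁ s₂ : ℕ) (c₁ c₂ : k) :
    ¬ IsSimpleDerivation
      (MvPolynomial.mkDerivation k
        ![X 1 ^ r, X 0 ^ t * (C c₁ * X 1 ^ s₁ + C c₂ * X 1 ^ s₂)]) := by
  have hf : Polynomial.aeval (X 1 : MvPolynomial (Fin 2) k)
      (Polynomial.C c₁ * Polynomial.X ^ s₁ + Polynomial.C c₂ * Polynomial.X ^ s₂) =
      C c₁ * X 1 ^ s₁ + C c₂ * X 1 ^ s₂ := by
    simp [algebraMap_eq]
  have := not_isSimpleDerivation_powPolyDerivation r t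
    (Polynomial.C c₁ * Polynomial.X ^ s₁ + Polynomial.C c₂ * Polynomial.X ^ s₂)
  rwa [powPolyDerivation, hf] at this

theorem not_simple_derivation_equal_x_powers
    (k : Type*) [Field k] [CharZero k]
    (r t s₁ s₂ : ℕ) (hs : s₁ ≠ s₂) (c₁ c₂ : k) :
    ¬ IsSimpleDerivation
      (MvPolynomial.mkDerivation k
        ![X 1 ^ r, X 0 ^ t * (C c₁ * X 1 ^ s₁ + C c₂ * X 1 ^ s₂)]) :=
  not_simple_derivation_equal_x_powers_general k r t s₁ s₂ c₁ c₂
end
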